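/- There is an absolute constant ε₁ > 0 such that: if λ₀ ∈ ℂ, δ > 0, K ⊂ ℂ is compact, and γ(B(λ₀, δ) ∖ K) < ε₁·δ, then |f(λ)| ≤ sup_{z ∈ B(λ₀,δ) ∩ K} |f(z)| for every λ ∈ B(λ₀, δ/2) and every f in the uniform closure of polynomials in C(closed B(λ₀, δ)). -/

import Mathlib

open Complex MeasureTheory Set Metric Filter Topology

/-- Analytic capacity of a compact set `K ⊂ ℂ`. -/
noncomputable def analyticCapacityCompact (K : Set ℂ) : ℝ :=
  sSup {r : ℝ | ∃ f : ℂ → ℂ, DifferentiableOn ℂ f Kᶜ ∧ (∀ z ∈ Kᶜ, ‖f z‖ ≤ 1) ∧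
    ∃ L c : ℂ, Tendsto f (Bornology.cobounded ℂ) (𝓝 L) ∧
      Tendsto (fun z => z * (f z - L)) (Bornology.cobounded ℂ) (𝓝 c) ∧ r = ‖c‖}

/-- Analytic capacity of an arbitrary set `E ⊂ ℂ`. -/
noncomputable def analyticCapacity (E : Set ℂ) : ℝ :=
  sSup {r : ℝ | ∃ K : Set ℂ, IsCompact K ∧ K ⊆ E ∧ r = analyticCapacityCompact K}

/-!
Let `M` be the supremum of `‖f‖` on `B(λ₀, δ) ∩ K`; the open set `U = {z ∈ B(λ₀, δ) | M < ‖f z‖}`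
misses `K`. Since `f` is a uniform limit of polynomials it is holomorphic on the disc, so if the
component `V` of `U` containing `λ` stays inside `B(λ₀, 3δ/4)`, the maximum modulus principle on
`V` gives `‖f λ‖ ≤ M`. Otherwise `V` reaches a point `b` with `‖b - λ‖ ≥ δ/4`, and a polygonal chain
`E ⊆ V` from `a = λ` to `b` carries a holomorphic logarithm `F` of `(z - a)/(z - b)` off `E`, namely
a sum of principal logarithms. Then `g = (z - a) exp (-F/2)` is a branch of `√((z - a)(z - b))`
and `G = g - (z - (a + b)/2)` satisfies `‖G‖ ≤ 6δ` off `E` and `z G(z) → -(b - a)²/8` at `∞`, so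
`γ(B(λ₀, δ) \ K) ≥ γ(E) ≥ ‖b - a‖²/(48δ) ≥ δ/768`.
-/

open Bornology

theorem IsOpen.disjoint_frontier_connectedComponentIn {X : Type*} [TopologicalSpace X]
    [LocallyConnectedSpace X] {U : Set X} (hU : IsOpen U) (x : X) :
    Disjoint (frontier (connectedComponentIn U x)) U := by
  refine Set.disjoint_left.2 fun y hy hyU => hy.2 (mem_interior_iff_mem_nhds.2 ?_)
  have hC : connectedComponentIn U y ∈ 𝓝 y := connectedComponentIn_mem_nhds (hU.mem_nhds hyU)
  obtain ⟨w, hwy, hwx⟩ := mem_closure_iff_nhds.1 (frontier_subset_closure hy) _ hC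
  rwa [connectedComponentIn_eq hwy, ← connectedComponentIn_eq hwx] at hC

theorem isPreconnected_compl_closedBall {E : Type*} [NormedAddCommGroup E] [NormedSpace ℝ E]
    (h : 1 < Module.rank ℝ E) (c : E) {R : ℝ} (hR : 0 ≤ R) :
    IsPreconnected (closedBall c R)ᶜ := by
  have hpolar : (closedBall c R)ᶜ = (fun p : E × ℝ => c + p.2 • p.1) '' (sphere 0 1 ×ˢ Ioi R) := by
    ext x
    simp only [mem_compl_iff, mem_closedBall, not_le, mem_image, mem_prod,
      mem_sphere_zero_iff_norm, mem_Ioi, Prod.exists]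
    constructor
    · intro hx
      have hx0 : ‖x - c‖ ≠ 0 := by rw [← dist_eq_norm]; linarith
      refine ⟨‖x - c‖⁻¹ • (x - c), ‖x - c‖, ⟨?_, by rwa [← dist_eq_norm]⟩, ?_⟩
      · rw [norm_smul, norm_inv, norm_norm, inv_mul_cancel₀ hx0]
      · rw [smul_smul, mul_inv_cancel₀ hx0, one_smul, add_sub_cancel]
    · rintro ⟨u, r, ⟨hu, hr⟩, rfl⟩
      rwa [dist_eq_norm, add_sub_cancel_left, norm_smul, hu, mul_one,
        Real.norm_of_nonneg (by linarith)]
  rw [hpolar]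
  exact ((isPreconnected_sphere h 0 1).prod isPreconnected_Ioi).image _
    (by fun_prop : Continuous _).continuousOn

theorem le_biSup_of_bounded {α : Type*} {g : α → ℝ} {s : Set α} {C : ℝ}
    (hC : ∀ w ∈ s, g w ≤ C) {z : α} (hz : z ∈ s) : g z ≤ ⨆ w ∈ s, g w :=
  le_ciSup₂ (f := fun w (_ : w ∈ s) => g w) ⟨C, by
    rintro _ ⟨_, ⟨w, rfl⟩, ⟨hw, rfl⟩⟩
    exact hC w hw⟩ z hz

theorem isCompact_segment {E : Type*} [AddCommGroup E] [Module ℝ E] [TopologicalSpace E]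
    [ContinuousAdd E] [ContinuousSMul ℝ E] (x y : E) : IsCompact (segment ℝ x y) := by
  rw [segment_eq_image']
  exact isCompact_Icc.image (by fun_prop)

theorem tendsto_sub_div_sub_cobounded {𝕜 : Type*} [NormedField 𝕜] (a b : 𝕜) :
    Tendsto (fun z => (z - a) / (z - b)) (cobounded 𝕜) (𝓝 1) := by
  have h : Tendsto (fun z => 1 + (b - a) * (z - b)⁻¹) (cobounded 𝕜) (𝓝 (1 + (b - a) * 0)) :=
    tendsto_const_nhds.add
      ((tendsto_inv₀_cobounded.comp (tendsto_sub_const_cobounded b)).const_mul _)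
  rw [mul_zero, add_zero] at h
  refine h.congr' ?_
  filter_upwards [eventually_ne_cobounded b] with z hz
  field_simp [sub_ne_zero.2 hz]
  ring

theorem sub_div_sub_mem_slitPlane {z u v : ℂ} (hz : z ∉ segment ℝ u v) :
    (z - u) / (z - v) ∈ slitPlane := by
  rw [mem_slitPlane_iff_not_le_zero]
  intro hle
  have hzv : z - v ≠ 0 := sub_ne_zero.2 fun h => hz (h ▸ right_mem_segment ℝ u v)
  set s := ((z - u) / (z - v)).re
  have hs : s ≤ 0 := (nonpos_iff.1 hle).1
  have hw : z - u = s * (z - v) := by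
    rw [← div_eq_iff hzv]; exact ext rfl (by simp [(nonpos_iff.1 hle).2])
  apply hz
  rw [segment_eq_image']
  refine ⟨-s / (1 - s), ⟨div_nonneg (by linarith) (by linarith),
    (div_le_one (by linarith)).2 (by linarith)⟩, ?_⟩
  have h1s : (1 : ℂ) - s ≠ 0 := by exact_mod_cast (by linarith : (1 : ℝ) - s ≠ 0)
  change u + (-s / (1 - s) : ℝ) • (v - u) = z
  rw [real_smul]
  push_cast
  field_simp
  linear_combination -hw

theorem differentiableOn_of_approx_by_polynomials {f : ℂ → ℂ} {s : Set ℂ} (hs : IsOpen s)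
    (h : ∀ ε > (0 : ℝ), ∃ P : Polynomial ℂ, ∀ z ∈ s, ‖f z - P.eval z‖ < ε) :
    DifferentiableOn ℂ f s := by
  choose! P hP using h
  have hP : TendstoUniformlyOn (fun ε z => (P ε).eval z) f (𝓝[>] 0) s := by
    refine Metric.tendstoUniformlyOn_iff.2 fun ε hε => ?_
    filter_upwards [Ioo_mem_nhdsGT hε] with ε' hε' z hz
    exact (dist_eq_norm (f z) _ ▸ hP ε' hε'.1 z hz).trans hε'.2
  exact hP.tendstoLocallyUniformlyOn.differentiableOn
    (Eventually.of_forall fun ε => (P ε).differentiable.differentiableOn) hs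

theorem norm_le_of_closure_connectedComponentIn_subset {f : ℂ → ℂ} {B : Set ℂ} (hBo : IsOpen B)
    (hBb : IsBounded B) (hf : DifferentiableOn ℂ f B) {M : ℝ} {l : ℂ} (hl : l ∈ B)
    (hV : closure (connectedComponentIn {z ∈ B | M < ‖f z‖} l) ⊆ B) : ‖f l‖ ≤ M := by
  have hU : IsOpen {z ∈ B | M < ‖f z‖} :=
    hf.continuousOn.isOpen_inter_preimage hBo (isOpen_lt continuous_const continuous_norm)
  by_contra! hlM
  refine hlM.not_ge (Complex.norm_le_of_forall_mem_frontier_norm_le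
    (hBb.subset (subset_closure.trans hV)) (hf.mono hV).diffContOnCl (fun z hz => ?_)
    (subset_closure (mem_connectedComponentIn ⟨hl, hlM⟩)))
  have hzU := Set.disjoint_left.1 (hU.disjoint_frontier_connectedComponentIn l) hz
  exact not_lt.1 fun h => hzU ⟨hV (frontier_subset_closure hz), h⟩

theorem norm_le_of_tendsto_cobounded {v : ℂ → ℂ} {c l₀ : ℂ} {R R' M : ℝ} (hR : 0 < R)
    (hRR' : R < R') (hv : DifferentiableOn ℂ v (closedBall l₀ R)ᶜ)
    (hc : Tendsto v (cobounded ℂ) (𝓝 c)) (hM : ∀ z ∈ sphere l₀ R', ‖v z‖ ≤ M) : ‖c‖ ≤ M := by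
  have hR' : 0 < R' := hR.trans hRR'
  -- maximum modulus for `ζ ↦ v (l₀ + ζ⁻¹)`, whose singularity at `0` is removable
  set w := Function.update (fun ζ : ℂ => v (l₀ + ζ⁻¹)) 0 c
  have hw : ∀ ζ ≠ 0, w ζ = v (l₀ + ζ⁻¹) := fun ζ hζ => Function.update_of_ne hζ _ _
  have hdist : ∀ ζ : ℂ, dist (l₀ + ζ⁻¹) l₀ = ‖ζ‖⁻¹ := by simp [dist_eq_norm]
  have hwd : DifferentiableOn ℂ w (ball 0 R⁻¹) := by
    refine (differentiableOn_compl_singleton_and_continuousAt_iff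
      (ball_mem_nhds _ (inv_pos.2 hR))).1 ⟨fun ζ ⟨hζR, hζ0⟩ => ?_, ?_⟩
    · have hζ0 : ζ ≠ 0 := hζ0
      have hout : l₀ + ζ⁻¹ ∈ (closedBall l₀ R)ᶜ := by
        rw [mem_compl_iff, mem_closedBall, not_le, hdist, lt_inv_comm₀ hR (norm_pos_iff.2 hζ0)]
        simpa using hζR
      have hvζ := ((hv.differentiableAt (isClosed_closedBall.isOpen_compl.mem_nhds hout)).comp ζ
        ((differentiableAt_inv hζ0).const_add l₀))
      exact (hvζ.congr_of_eventuallyEq ((eventually_ne_nhds hζ0).mono hw)).differentiableWithinAt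
    · exact continuousAt_update_same.2
        (hc.comp ((tendsto_const_add_cobounded l₀).comp tendsto_inv₀_nhdsNE_zero))
  have hmax : ‖w 0‖ ≤ M := by
    refine Complex.norm_le_of_forall_mem_frontier_norm_le isBounded_ball
      (hwd.mono ?_).diffContOnCl (fun ζ hζ => ?_) (subset_closure (mem_ball_self (inv_pos.2 hR')))
    · rw [closure_ball _ (inv_pos.2 hR').ne']
      exact closedBall_subset_ball ((inv_lt_inv₀ hR' hR).2 hRR')
    · rw [frontier_ball _ (inv_pos.2 hR').ne', mem_sphere_zero_iff_norm] at hζ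
      have hζ0 : ζ ≠ 0 := norm_ne_zero_iff.1 (hζ.trans_ne (inv_pos.2 hR').ne')
      rw [hw ζ hζ0]
      exact hM _ (by rw [mem_sphere, hdist, hζ, inv_inv])
  simpa [w] using hmax

theorem norm_coeff_le_of_subset_closedBall {K : Set ℂ} {l₀ : ℂ} {R : ℝ} (hR : 0 < R)
    (hK : K ⊆ closedBall l₀ R) {f : ℂ → ℂ} {L c : ℂ} (hf : DifferentiableOn ℂ f Kᶜ)
    (hb : ∀ z ∈ Kᶜ, ‖f z‖ ≤ 1) (hL : Tendsto f (cobounded ℂ) (𝓝 L))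
    (hc : Tendsto (fun z => z * (f z - L)) (cobounded ℂ) (𝓝 c)) : ‖c‖ ≤ 4 * R := by
  have hKc : ∀ᶠ z in cobounded ℂ, z ∈ Kᶜ := (isBounded_closedBall.subset hK).compl
  have hL1 : ‖L‖ ≤ 1 := le_of_tendsto hL.norm (hKc.mono hb)
  have hfL : Tendsto (fun z => f z - L) (cobounded ℂ) (𝓝 0) := by
    simpa using hL.sub_const L
  have hv : Tendsto (fun z => (z - l₀) * (f z - L)) (cobounded ℂ) (𝓝 c) := by
    simpa [sub_mul] using hc.sub (hfL.const_mul l₀)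
  refine norm_le_of_tendsto_cobounded (l₀ := l₀) hR (by linarith : R < 2 * R)
    (((differentiable_id.sub_const l₀).differentiableOn).mul
      ((hf.mono (compl_subset_compl.2 hK)).sub_const L)) hv fun z hz => ?_
  have hzK : z ∈ Kᶜ := fun h => (mem_closedBall.1 (hK h)).not_gt (by rw [mem_sphere.1 hz]; linarith)
  rw [mem_sphere, dist_eq_norm] at hz
  calc ‖(z - l₀) * (f z - L)‖ ≤ 2 * R * (1 + 1) := by
        rw [norm_mul, hz]; gcongr; exact (norm_sub_le _ _).trans (add_le_add (hb z hzK) hL1)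
    _ = 4 * R := by ring

theorem div_le_analyticCapacityCompact {K : Set ℂ} (hK : IsBounded K) {f : ℂ → ℂ} {L c : ℂ}
    {C : ℝ} (hC : 0 < C) (hf : DifferentiableOn ℂ f Kᶜ) (hb : ∀ z ∈ Kᶜ, ‖f z‖ ≤ C)
    (hL : Tendsto f (cobounded ℂ) (𝓝 L))
    (hc : Tendsto (fun z => z * (f z - L)) (cobounded ℂ) (𝓝 c)) :
    ‖c‖ / C ≤ analyticCapacityCompact K := by
  obtain ⟨R, hR, hKR⟩ := hK.subset_closedBall_lt 0 0
  have hC' : (C : ℂ) ≠ 0 := ofReal_ne_zero.2 hC.ne'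
  refine le_csSup ⟨4 * R, ?_⟩ ⟨fun z => f z / C, hf.div_const _, fun z hz => ?_, L / C, c / C,
    hL.div_const _, ?_, ?_⟩
  · rintro _ ⟨g, hg, hgb, L', c', hL', hc', rfl⟩
    exact norm_coeff_le_of_subset_closedBall hR hKR hg hgb hL' hc'
  · rw [norm_div, norm_real, Real.norm_of_nonneg hC.le, div_le_one hC]
    exact hb z hz
  · refine (hc.div_const (C : ℂ)).congr fun z => ?_
    field_simp
  · rw [norm_div, norm_real, Real.norm_of_nonneg hC.le]

theorem analyticCapacityCompact_le_analyticCapacity {K W : Set ℂ} (hK : IsCompact K)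
    (hKW : K ⊆ W) (hW : IsBounded W) : analyticCapacityCompact K ≤ analyticCapacity W := by
  obtain ⟨R, hR, hWR⟩ := hW.subset_closedBall_lt 0 0
  refine le_csSup ⟨4 * R, ?_⟩ ⟨K, hK, hKW, rfl⟩
  rintro _ ⟨K', -, hK'W, rfl⟩
  refine Real.sSup_le ?_ (by positivity)
  rintro _ ⟨g, hg, hgb, L, c, hL, hc, rfl⟩
  exact norm_coeff_le_of_subset_closedBall hR (hK'W.trans hWR) hg hgb hL hc

def HasLogRatio (W : Set ℂ) (a b : ℂ) : Prop :=
  ∃ E ⊆ W, IsCompact E ∧ ∃ F : ℂ → ℂ, DifferentiableOn ℂ F Eᶜ ∧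
    (∀ z ∉ E, exp (F z) = (z - a) / (z - b)) ∧ Tendsto F (cobounded ℂ) (𝓝 0)

namespace HasLogRatio

variable {W : Set ℂ} {a b c : ℂ}

theorem of_segment_subset (h : segment ℝ a b ⊆ W) : HasLogRatio W a b := by
  refine ⟨segment ℝ a b, h, isCompact_segment a b, fun z => log ((z - a) / (z - b)), ?_, ?_, ?_⟩
  · intro z hz
    have hzb : z - b ≠ 0 := sub_ne_zero.2 fun h => hz (h ▸ right_mem_segment ℝ a b)
    exact ((differentiableAt_log (sub_div_sub_mem_slitPlane hz)).comp z
      ((differentiableAt_id.sub_const a).div (differentiableAt_id.sub_const b)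
        hzb)).differentiableWithinAt
  · exact fun z hz => exp_log (slitPlane_ne_zero (sub_div_sub_mem_slitPlane hz))
  · simpa [Function.comp_def] using
      (continuousAt_clog one_mem_slitPlane).tendsto.comp (tendsto_sub_div_sub_cobounded a b)

theorem mono {W' : Set ℂ} (h : HasLogRatio W a b) (hW : W ⊆ W') : HasLogRatio W' a b := by
  obtain ⟨E, hEW, hE⟩ := h
  exact ⟨E, hEW.trans hW, hE⟩

theorem symm (h : HasLogRatio W a b) : HasLogRatio W b a := by
  obtain ⟨E, hEW, hE, F, hF, hexp, hF0⟩ := h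
  refine ⟨E, hEW, hE, fun z => -F z, hF.neg, fun z hz => ?_, by simpa using hF0.neg⟩
  rw [exp_neg, hexp z hz, inv_div]

theorem trans (hab : HasLogRatio W a b) (hbc : HasLogRatio W b c) : HasLogRatio W a c := by
  obtain ⟨E₁, hE₁W, hE₁, F₁, hF₁, hexp₁, hF₁0⟩ := hab
  obtain ⟨E₂, hE₂W, hE₂, F₂, hF₂, hexp₂, hF₂0⟩ := hbc
  refine ⟨E₁ ∪ E₂, union_subset hE₁W hE₂W, hE₁.union hE₂, fun z => F₁ z + F₂ z,
    (hF₁.mono (compl_subset_compl.2 subset_union_left)).add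
      (hF₂.mono (compl_subset_compl.2 subset_union_right)), fun z hz => ?_,
    by simpa using hF₁0.add hF₂0⟩
  rw [mem_union, not_or] at hz
  have hzb : z - b ≠ 0 := (div_ne_zero_iff.1 (hexp₁ z hz.1 ▸ exp_ne_zero (F₁ z))).2
  rw [exp_add, hexp₁ z hz.1, hexp₂ z hz.2, div_mul_div_cancel₀ hzb]

end HasLogRatio

theorem IsPreconnected.hasLogRatio {V : Set ℂ} (hV : IsPreconnected V) (hVo : IsOpen V) {a b : ℂ}
    (ha : a ∈ V) (hb : b ∈ V) : HasLogRatio V a b := by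
  refine hV.induction₂ (HasLogRatio V) (fun x hx => ?_) (fun x y z _ _ _ => HasLogRatio.trans)
    (fun x y _ _ => HasLogRatio.symm) ha hb
  obtain ⟨ε, hε, hball⟩ := Metric.isOpen_iff.1 hVo x hx
  filter_upwards [nhdsWithin_le_nhds (ball_mem_nhds x hε)] with y hy
  exact .of_segment_subset (((convex_ball x ε).segment_subset (mem_ball_self hε) hy).trans hball)

theorem mem_and_mem_of_exp_eq {E : Set ℂ} {F : ℂ → ℂ} {a b : ℂ}
    (hexp : ∀ z ∉ E, exp (F z) = (z - a) / (z - b)) : a ∈ E ∧ b ∈ E := by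
  have hne : ∀ z ∉ E, z - a ≠ 0 ∧ z - b ≠ 0 := fun z hz =>
    div_ne_zero_iff.1 (hexp z hz ▸ exp_ne_zero _)
  exact ⟨by_contra fun h => (hne a h).1 (sub_self a), by_contra fun h => (hne b h).2 (sub_self b)⟩

theorem mul_exp_neg_half_sq {w z a b : ℂ} (h : exp w = (z - a) / (z - b)) :
    ((z - a) * exp (-w / 2)) ^ 2 = (z - a) * (z - b) := by
  obtain ⟨hza, hzb⟩ := div_ne_zero_iff.1 (h ▸ exp_ne_zero w)
  rw [mul_pow, sq (exp _), ← exp_add, show -w / 2 + -w / 2 = -w by ring, exp_neg, h]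
  field_simp

theorem norm_mul_norm_le_sq {G u e : ℂ} (h : G * (G + 2 * u) = -e ^ 2) (hG : ‖G‖ ≤ ‖u‖) :
    ‖G‖ * ‖u‖ ≤ ‖e‖ ^ 2 := by
  have h1 : ‖G‖ * ‖G + 2 * u‖ = ‖e‖ ^ 2 := by rw [← norm_mul, h, norm_neg, norm_pow]
  have h2 : 2 * ‖u‖ ≤ ‖G + 2 * u‖ + ‖G‖ := by
    simpa using norm_sub_le (G + 2 * u) G
  nlinarith [norm_nonneg G]

/-- The two roots of `X * (X + 2 * u) = -e ^ 2` lie on opposite sides of `‖u‖` when `‖e‖ < ‖u‖`,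
so the root selected by `G` near `∞` persists on the connected exterior. -/
theorem norm_mul_le_sq_of_mem_compl_closedBall {G : ℂ → ℂ} {c m e : ℂ} {R : ℝ}
    (hR : 0 ≤ R) (hG : ContinuousOn G (closedBall c R)ᶜ) (hG0 : Tendsto G (cobounded ℂ) (𝓝 0))
    (hq : ∀ z ∈ (closedBall c R)ᶜ, G z * (G z + 2 * (z - m)) = -e ^ 2)
    (he : ∀ z ∈ (closedBall c R)ᶜ, ‖e‖ < ‖z - m‖) {z : ℂ} (hz : z ∈ (closedBall c R)ᶜ) :
    ‖G z‖ * ‖z - m‖ ≤ ‖e‖ ^ 2 := by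
  refine norm_mul_norm_le_sq (hq z hz) (le_of_not_ge fun hle => ?_)
  have hev : ∀ᶠ w in cobounded ℂ, ‖G w‖ ≤ ‖w - m‖ := by
    filter_upwards [hG0.norm.eventually_le_const (by norm_num : ‖(0 : ℂ)‖ < 1),
      (tendsto_norm_cobounded_atTop.comp (tendsto_sub_const_cobounded m)).eventually_ge_atTop 1]
      with w h1 h2
    exact h1.trans h2
  obtain ⟨w, hw, hweq⟩ :=
    (isPreconnected_compl_closedBall (by simp) c hR).intermediate_value₂_eventually₁ hz
      (le_principal_iff.2 isBounded_closedBall.compl) (by fun_prop) hG.norm hle hev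
  have := norm_mul_norm_le_sq (hq w hw) hweq.ge
  nlinarith [he w hw, norm_nonneg e]

theorem norm_sub_le_of_sq_eq {g z a b m : ℂ} {r : ℝ} (hg : g ^ 2 = (z - a) * (z - b))
    (ha : ‖z - a‖ ≤ r) (hb : ‖z - b‖ ≤ r) (hm : ‖z - m‖ ≤ r) : ‖g - (z - m)‖ ≤ 2 * r := by
  have hr : 0 ≤ r := (norm_nonneg _).trans ha
  have hgr : ‖g‖ ≤ r := by
    refine (pow_le_pow_iff_left₀ (norm_nonneg _) hr two_ne_zero).1 ?_
    rw [← norm_pow, hg, norm_mul]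
    nlinarith [norm_nonneg (z - a), norm_nonneg (z - b)]
  linarith [norm_sub_le g (z - m)]

theorem tendsto_mul_of_mul_eq {𝕜 : Type*} [NormedField 𝕜] {G q : 𝕜 → 𝕜} {k ℓ : 𝕜} (hℓ : ℓ ≠ 0)
    (hGq : ∀ᶠ z in cobounded 𝕜, G z * q z = k)
    (hq : Tendsto (fun z => q z / z) (cobounded 𝕜) (𝓝 ℓ)) :
    Tendsto (fun z => z * G z) (cobounded 𝕜) (𝓝 (k / ℓ)) := by
  refine ((tendsto_const_nhds (x := k)).div hq hℓ).congr' ?_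
  filter_upwards [hGq, eventually_ne_cobounded 0, hq.eventually_ne hℓ] with z hGqz hz hqz
  change k / (q z / z) = z * G z
  rw [← hGqz]
  field_simp [div_ne_zero_iff.1 hqz]

theorem tendsto_zero_of_tendsto_mul {𝕜 : Type*} [NormedField 𝕜] {G : 𝕜 → 𝕜} {c : 𝕜}
    (h : Tendsto (fun z => z * G z) (cobounded 𝕜) (𝓝 c)) : Tendsto G (cobounded 𝕜) (𝓝 0) := by
  have h' := h.mul tendsto_inv₀_cobounded
  rw [mul_zero] at h'
  refine h'.congr' ?_
  filter_upwards [eventually_ne_cobounded 0] with z hz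
  field_simp

noncomputable def sqrtBranchDefect (F : ℂ → ℂ) (a b z : ℂ) : ℂ :=
  (z - a) * exp (-F z / 2) - (z - (a + b) / 2)

section SqrtBranchDefect

variable {E : Set ℂ} {F : ℂ → ℂ} {a b : ℂ}

theorem differentiableOn_sqrtBranchDefect {s : Set ℂ} (hF : DifferentiableOn ℂ F s) :
    DifferentiableOn ℂ (sqrtBranchDefect F a b) s :=
  ((differentiableOn_id.sub_const a).mul (hF.neg.div_const 2).cexp).sub
    (differentiableOn_id.sub_const _)

theorem sqrtBranchDefect_mul (hexp : ∀ z ∉ E, exp (F z) = (z - a) / (z - b)) {z : ℂ}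
    (hz : z ∉ E) :
    sqrtBranchDefect F a b z * (sqrtBranchDefect F a b z + 2 * (z - (a + b) / 2)) =
      -((b - a) / 2) ^ 2 := by
  unfold sqrtBranchDefect
  linear_combination mul_exp_neg_half_sq (hexp z hz)

theorem tendsto_mul_sqrtBranchDefect (hE : IsBounded E)
    (hexp : ∀ z ∉ E, exp (F z) = (z - a) / (z - b)) (hF0 : Tendsto F (cobounded ℂ) (𝓝 0)) :
    Tendsto (fun z => z * sqrtBranchDefect F a b z) (cobounded ℂ)
      (𝓝 (-((b - a) / 2) ^ 2 / 2)) := by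
  have hEc : ∀ᶠ z in cobounded ℂ, z ∈ Eᶜ := hE.compl
  refine tendsto_mul_of_mul_eq two_ne_zero (hEc.mono fun z hz => sqrtBranchDefect_mul hexp hz) ?_
  have hF2 : Tendsto (fun z => -F z / 2) (cobounded ℂ) (𝓝 0) := by
    simpa using hF0.neg.div_const (2 : ℂ)
  have h := ((tendsto_sub_div_sub_cobounded a 0).mul ((continuous_exp.tendsto 0).comp
    hF2)).add (tendsto_sub_div_sub_cobounded ((a + b) / 2) 0)
  rw [exp_zero, mul_one, one_add_one_eq_two] at h
  refine h.congr' ?_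
  filter_upwards [eventually_ne_cobounded 0] with z hz
  simp only [sqrtBranchDefect, Function.comp]
  field_simp
  ring

theorem norm_sqrtBranchDefect_le {l₀ : ℂ} {δ : ℝ} (hE : E ⊆ ball l₀ δ)
    (hF : DifferentiableOn ℂ F Eᶜ) (hexp : ∀ z ∉ E, exp (F z) = (z - a) / (z - b))
    (hF0 : Tendsto F (cobounded ℂ) (𝓝 0)) {z : ℂ} (hz : z ∉ E) :
    ‖sqrtBranchDefect F a b z‖ ≤ 6 * δ := by
  obtain ⟨haE, hbE⟩ := mem_and_mem_of_exp_eq hexp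
  have ha := mem_ball_iff_norm.1 (hE haE)
  have hb := mem_ball_iff_norm.1 (hE hbE)
  have hδ := pos_of_mem_ball (hE haE)
  have hm : ‖(a + b) / 2 - l₀‖ < δ := by
    rw [show (a + b) / 2 - l₀ = ((a - l₀) + (b - l₀)) / 2 by ring, norm_div, RCLike.norm_two]
    linarith [norm_add_le (a - l₀) (b - l₀)]
  by_cases hz2 : z ∈ closedBall l₀ (2 * δ)
  · rw [mem_closedBall_iff_norm] at hz2
    have hzl₀ : ∀ w, ‖w - l₀‖ < δ → ‖z - w‖ ≤ 3 * δ := fun w hw => by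
      linarith [norm_sub_le_norm_sub_add_norm_sub z l₀ w, norm_sub_rev l₀ w]
    exact (norm_sub_le_of_sq_eq (mul_exp_neg_half_sq (hexp z hz)) (hzl₀ a ha) (hzl₀ b hb)
      (hzl₀ _ hm)).trans_eq (by ring)
  have he : ‖(b - a) / 2‖ < δ := by
    rw [show (b - a) / 2 = ((b - l₀) - (a - l₀)) / 2 by ring, norm_div, RCLike.norm_two]
    linarith [norm_sub_le (b - l₀) (a - l₀)]
  have hout : ∀ w ∈ (closedBall l₀ (2 * δ))ᶜ, w ∉ E ∧ δ < ‖w - (a + b) / 2‖ := by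
    intro w hw
    rw [mem_compl_iff, mem_closedBall_iff_norm, not_le] at hw
    refine ⟨fun hwE => ?_, ?_⟩
    · linarith [mem_ball_iff_norm.1 (hE hwE)]
    · linarith [norm_sub_le_norm_sub_add_norm_sub w ((a + b) / 2) l₀, norm_sub_rev ((a + b) / 2) l₀]
  have := norm_mul_le_sq_of_mem_compl_closedBall (by positivity)
    ((differentiableOn_sqrtBranchDefect hF).continuousOn.mono fun w hw => (hout w hw).1)
    (tendsto_zero_of_tendsto_mul (tendsto_mul_sqrtBranchDefect (isBounded_ball.subset hE) hexp hF0))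
    (fun w hw => sqrtBranchDefect_mul hexp (hout w hw).1) (fun w hw => he.trans (hout w hw).2) hz2
  nlinarith [(hout z hz2).2, norm_nonneg ((b - a) / 2), norm_nonneg (sqrtBranchDefect F a b z)]

end SqrtBranchDefect

theorem le_analyticCapacityCompact_of_exp_eq {E : Set ℂ} {l₀ a b : ℂ} {δ : ℝ}
    (hE : E ⊆ ball l₀ δ) {F : ℂ → ℂ} (hF : DifferentiableOn ℂ F Eᶜ)
    (hexp : ∀ z ∉ E, exp (F z) = (z - a) / (z - b)) (hF0 : Tendsto F (cobounded ℂ) (𝓝 0)) :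
    ‖b - a‖ ^ 2 / (48 * δ) ≤ analyticCapacityCompact E := by
  have hδ : 0 < δ := pos_of_mem_ball (hE (mem_and_mem_of_exp_eq hexp).1)
  have hzG := tendsto_mul_sqrtBranchDefect (isBounded_ball.subset hE) hexp hF0
  calc ‖b - a‖ ^ 2 / (48 * δ) = ‖-((b - a) / 2) ^ 2 / 2‖ / (6 * δ) := by
        simp only [norm_div, norm_neg, norm_pow, RCLike.norm_two]
        field_simp
        ring
    _ ≤ analyticCapacityCompact E :=
        div_le_analyticCapacityCompact (isBounded_ball.subset hE) (by positivity)
          (differentiableOn_sqrtBranchDefect hF) (fun _ => norm_sqrtBranchDefect_le hE hF hexp hF0)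
          (tendsto_zero_of_tendsto_mul hzG) (by simpa using hzG)

theorem HasLogRatio.le_analyticCapacity {W : Set ℂ} {a b l₀ : ℂ} {δ : ℝ} (h : HasLogRatio W a b)
    (hW : W ⊆ ball l₀ δ) : ‖b - a‖ ^ 2 / (48 * δ) ≤ analyticCapacity W := by
  obtain ⟨E, hEW, hE, F, hF, hexp, hF0⟩ := h
  exact (le_analyticCapacityCompact_of_exp_eq (hEW.trans hW) hF hexp hF0).trans
    (analyticCapacityCompact_le_analyticCapacity hE hEW (isBounded_ball.subset hW))

theorem norm_sub_sq_div_le_analyticCapacity {U W : Set ℂ} {l₀ l z : ℂ} {δ : ℝ} (hU : IsOpen U)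
    (hUW : U ⊆ W) (hW : W ⊆ ball l₀ δ) (hz : z ∈ connectedComponentIn U l) :
    ‖z - l‖ ^ 2 / (48 * δ) ≤ analyticCapacity W :=
  ((isPreconnected_connectedComponentIn.hasLogRatio hU.connectedComponentIn
    (mem_connectedComponentIn (connectedComponentIn_nonempty_iff.1 ⟨z, hz⟩)) hz).mono
    ((connectedComponentIn_subset U l).trans hUW)).le_analyticCapacity hW

/-- Corollary 2.4 of the paper: there is an absolute constant
`ε₁ > 0` such that if `λ₀ ∈ ℂ`, `δ > 0`, `K ⊂ ℂ` is compact and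
`γ(B(λ₀,δ) ∖ K) < ε₁ δ`, then `|f(λ)| ≤ sup_{z ∈ B(λ₀,δ) ∩ K} |f(z)|` for every
`λ ∈ B(λ₀, δ/2)` and every `f` in the uniform closure of polynomials in
`C(closed B(λ₀,δ))`. -/
theorem capacity_maximum_principle_disk :
    ∃ ε₁ : ℝ, 0 < ε₁ ∧
      ∀ (l₀ : ℂ) (δ : ℝ), 0 < δ → ∀ K : Set ℂ, IsCompact K →
        analyticCapacity (Metric.ball l₀ δ \ K) < ε₁ * δ →
        ∀ f : ℂ → ℂ, ContinuousOn f (Metric.closedBall l₀ δ) →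
          (∀ ε > (0:ℝ), ∃ P : Polynomial ℂ,
            ∀ z ∈ Metric.closedBall l₀ δ, ‖f z - P.eval z‖ < ε) →
          ∀ l ∈ Metric.ball l₀ (δ/2),
            ‖f l‖ ≤ ⨆ z ∈ Metric.ball l₀ δ ∩ K, ‖f z‖ := by
  refine ⟨768⁻¹, by norm_num, fun l₀ δ hδ K _ hcap f hfc happrox l hl => ?_⟩
  have hfd : DifferentiableOn ℂ f (ball l₀ δ) := differentiableOn_of_approx_by_polynomials
    isOpen_ball fun ε hε => (happrox ε hε).imp fun P hP z hz => hP z (ball_subset_closedBall hz)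
  set M := ⨆ z ∈ ball l₀ δ ∩ K, ‖f z‖
  obtain ⟨C, hC⟩ := (isCompact_closedBall l₀ δ).exists_bound_of_continuousOn hfc
  have hM : ∀ z ∈ ball l₀ δ ∩ K, ‖f z‖ ≤ M :=
    fun z => le_biSup_of_bounded fun w hw => hC w (ball_subset_closedBall hw.1)
  set U := {z ∈ ball l₀ δ | M < ‖f z‖}
  have hU : IsOpen U :=
    hfd.continuousOn.isOpen_inter_preimage isOpen_ball (isOpen_lt continuous_const continuous_norm)
  have hUK : U ⊆ ball l₀ δ \ K := fun z hz => ⟨hz.1, fun hzK => (hM z ⟨hz.1, hzK⟩).not_gt hz.2⟩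
  by_cases hV : connectedComponentIn U l ⊆ closedBall l₀ (3 * δ / 4)
  · exact norm_le_of_closure_connectedComponentIn_subset isOpen_ball isBounded_ball hfd
      (ball_subset_ball (by linarith) hl)
      ((closure_minimal hV isClosed_closedBall).trans (closedBall_subset_ball (by linarith)))
  obtain ⟨z, hzV, hz⟩ := not_subset.1 hV
  have hzl : δ / 4 ≤ ‖z - l‖ := by
    rw [← dist_eq_norm]
    linarith [dist_triangle z l l₀, mem_ball.1 hl, not_le.1 (mt mem_closedBall.2 hz)]
  have := calc 768⁻¹ * δ = (δ / 4) ^ 2 / (48 * δ) := by field_simp; ring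
    _ ≤ ‖z - l‖ ^ 2 / (48 * δ) := by gcongr
    _ ≤ analyticCapacity (ball l₀ δ \ K) :=
      norm_sub_sq_div_le_analyticCapacity hU hUK sdiff_subset hzV
  linarith
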